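/- arXiv:2106.12860 — 2 statements merged into one kernel-verified Lean document; each statement's English description precedes it below -/
import Mathlib

section
/- Let K, G, G_c, B, B_c, K_c be nonzero real numbers. Let ε be a symmetric 3×3 matrix, ω a skew-symmetric 3×3 matrix, and χ an arbitrary 3×3 matrix; set e = dev ε, g_sym = dev(sym χ), g_skw = skew χ. Define the stress σ = K (tr ε) I + 2G e + 2G_c ω and couple-stress μ = K_c (tr χ) I + 2B g_sym + 2B_c g_skw, and write s_sym = dev(sym σ), s_skw = skew σ, m_sym = dev(sym μ), m_skw = skew μ. Then the elastic distortion energy Ψ_D = (1/2)[ s_sym : ε + s_skw : ω + m_sym : g_sym + m_skw : g_skw + (1/3)(tr μ)(tr χ) ] satisfies Ψ_D = (1/(4G)) [ s_sym : s_sym + (G/G_c) s_skw : s_skw + (G/B) m_sym : m_sym + (G/B_c) m_skw : m_skw + (2G/K_c)(tr μ)²/9 ]. -/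
open Matrix

/-- Double contraction `A : B = ∑ i j, A_{ij} B_{ij}`. -/
def dc (A B : Matrix (Fin 3) (Fin 3) ℝ) : ℝ := ∑ i, ∑ j, A i j * B i j

/-- Symmetric part `(A + Aᵀ)/2`. -/
noncomputable def symPart (A : Matrix (Fin 3) (Fin 3) ℝ) : Matrix (Fin 3) (Fin 3) ℝ :=
  (1 / 2 : ℝ) • (A + Aᵀ)

/-- Skew-symmetric part `(A - Aᵀ)/2`. -/
noncomputable def skewPart (A : Matrix (Fin 3) (Fin 3) ℝ) : Matrix (Fin 3) (Fin 3) ℝ :=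
  (1 / 2 : ℝ) • (A - Aᵀ)

/-- Deviatoric part `A - (tr A / 3) I`. -/
noncomputable def dev (A : Matrix (Fin 3) (Fin 3) ℝ) : Matrix (Fin 3) (Fin 3) ℝ :=
  A - (A.trace / 3) • (1 : Matrix (Fin 3) (Fin 3) ℝ)

/-! Once the constitutive law is unfolded, each of `s_sym, s_skw, m_sym, m_skw` is a scalar
multiple (`2G, 2G_c, 2B, 2B_c`) of the kinematic quantity it is contracted with, and
`tr μ = 3 K_c tr χ`. Both sides of the identity then become the same combination of
`e : e, ω : ω, g_sym : g_sym, g_skw : g_skw` and `(tr χ)²`; the only non-diagonal term,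
`s_sym : ε`, reduces to `2G e : e` because a deviator is orthogonal to `I`. -/

variable {S W : Matrix (Fin 3) (Fin 3) ℝ}

section Contraction

variable (A B C : Matrix (Fin 3) (Fin 3) ℝ) (c : ℝ)

lemma dc_smul_left : dc (c • A) B = c * dc A B := by
  simp [dc, Finset.mul_sum, mul_assoc]

lemma dc_smul_right : dc A (c • B) = c * dc A B := by
  simp only [dc, Matrix.smul_apply, smul_eq_mul, Finset.mul_sum]
  exact Finset.sum_congr rfl fun i _ => Finset.sum_congr rfl fun j _ => by ring

lemma dc_add_right : dc A (B + C) = dc A B + dc A C := by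
  simp [dc, mul_add, Finset.sum_add_distrib]

lemma dc_one_right : dc A 1 = A.trace := by
  simp [dc, one_apply, trace, diag]

end Contraction

lemma trace_dev (A : Matrix (Fin 3) (Fin 3) ℝ) : (dev A).trace = 0 := by
  simp [dev, trace_sub, trace_smul, trace_one]

lemma dev_transpose (A : Matrix (Fin 3) (Fin 3) ℝ) : (dev A)ᵀ = dev Aᵀ := by
  simp [dev, transpose_smul, trace_transpose]

lemma symPart_transpose (A : Matrix (Fin 3) (Fin 3) ℝ) : (symPart A)ᵀ = symPart A := by
  simp [symPart, transpose_smul, add_comm]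

lemma skewPart_transpose (A : Matrix (Fin 3) (Fin 3) ℝ) : (skewPart A)ᵀ = -skewPart A := by
  simp [skewPart, transpose_smul, smul_sub]

lemma trace_eq_zero_of_transpose_eq_neg (hW : Wᵀ = -W) : W.trace = 0 := by
  have h := trace_transpose W
  rw [hW, trace_neg] at h
  linarith

lemma dc_dev_self (A : Matrix (Fin 3) (Fin 3) ℝ) : dc (dev A) A = dc (dev A) (dev A) := by
  have hA : A = dev A + (A.trace / 3) • (1 : Matrix (Fin 3) (Fin 3) ℝ) := by
    rw [dev, sub_add_cancel]
  calc dc (dev A) A = dc (dev A) (dev A + (A.trace / 3) • 1) := congrArg _ hA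
    _ = dc (dev A) (dev A) := by
      rw [dc_add_right, dc_smul_right, dc_one_right, trace_dev, mul_zero, add_zero]

section Spherical

variable (a b c : ℝ)

lemma symPart_spherical_add (hS : Sᵀ = S) (hW : Wᵀ = -W) :
    symPart (a • (1 : Matrix (Fin 3) (Fin 3) ℝ) + b • S + c • W) = a • 1 + b • S := by
  simp only [symPart, transpose_add, transpose_smul, transpose_one, hS, hW]
  ext i j
  simp only [Matrix.smul_apply, Matrix.add_apply, Matrix.neg_apply, smul_eq_mul]
  ring

lemma skewPart_spherical_add (hS : Sᵀ = S) (hW : Wᵀ = -W) :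
    skewPart (a • (1 : Matrix (Fin 3) (Fin 3) ℝ) + b • S + c • W) = c • W := by
  simp only [skewPart, transpose_add, transpose_smul, transpose_one, hS, hW]
  ext i j
  simp only [Matrix.smul_apply, Matrix.add_apply, Matrix.sub_apply, Matrix.neg_apply,
    smul_eq_mul]
  ring

lemma trace_spherical_add (hS₀ : S.trace = 0) (hW : Wᵀ = -W) :
    (a • (1 : Matrix (Fin 3) (Fin 3) ℝ) + b • S + c • W).trace = 3 * a := by
  simp [trace_add, trace_smul, hS₀, trace_eq_zero_of_transpose_eq_neg hW]
  ring

lemma dev_symPart_spherical_add (hS : Sᵀ = S) (hS₀ : S.trace = 0) (hW : Wᵀ = -W) :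
    dev (symPart (a • (1 : Matrix (Fin 3) (Fin 3) ℝ) + b • S + c • W)) = b • S := by
  rw [symPart_spherical_add a b c hS hW, dev]
  simp [trace_add, trace_smul, hS₀]

end Spherical

theorem stmt_7_general (K G Gc B Bc Kc : ℝ)
    (hG : G ≠ 0) (hGc : Gc ≠ 0) (hB : B ≠ 0) (hBc : Bc ≠ 0) (hKc : Kc ≠ 0)
    (ε ω χ : Matrix (Fin 3) (Fin 3) ℝ) (hε : εᵀ = ε) (hω : ωᵀ = -ω) :
    let e := dev ε
    let gsym := dev (symPart χ)
    let gskw := skewPart χ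
    let σ := (K * ε.trace) • (1 : Matrix (Fin 3) (Fin 3) ℝ) + (2 * G) • e + (2 * Gc) • ω
    let μ := (Kc * χ.trace) • (1 : Matrix (Fin 3) (Fin 3) ℝ) + (2 * B) • gsym + (2 * Bc) • gskw
    let ssym := dev (symPart σ)
    let sskw := skewPart σ
    let msym := dev (symPart μ)
    let mskw := skewPart μ
    (1 / 2 : ℝ) * (dc ssym ε + dc sskw ω + dc msym gsym + dc mskw gskw
        + (1 / 3) * μ.trace * χ.trace) =
      (1 / (4 * G)) * (dc ssym ssym + (G / Gc) * dc sskw sskw + (G / B) * dc msym msym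
        + (G / Bc) * dc mskw mskw + (2 * G / Kc) * μ.trace ^ 2 / 9) := by
  intro e gsym gskw σ μ ssym sskw msym mskw
  have he : eᵀ = e := by rw [dev_transpose, hε]
  have hgsym : gsymᵀ = gsym := by rw [dev_transpose, symPart_transpose]
  have hgskw : gskwᵀ = -gskw := skewPart_transpose χ
  have hssym : ssym = (2 * G) • e := dev_symPart_spherical_add _ _ _ he (trace_dev ε) hω
  have hsskw : sskw = (2 * Gc) • ω := skewPart_spherical_add _ _ _ he hω
  have hmsym : msym = (2 * B) • gsym :=
    dev_symPart_spherical_add _ _ _ hgsym (trace_dev _) hgskw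
  have hmskw : mskw = (2 * Bc) • gskw := skewPart_spherical_add _ _ _ hgsym hgskw
  have htrμ : μ.trace = 3 * (Kc * χ.trace) := trace_spherical_add _ _ _ (trace_dev _) hgskw
  rw [hssym, hsskw, hmsym, hmskw, htrμ]
  simp only [dc_smul_left, dc_smul_right, e, dc_dev_self]
  field_simp
  ring

theorem stmt_7 (K G Gc B Bc Kc : ℝ)
    (hK : K ≠ 0) (hG : G ≠ 0) (hGc : Gc ≠ 0) (hB : B ≠ 0) (hBc : Bc ≠ 0) (hKc : Kc ≠ 0)
    (ε ω χ : Matrix (Fin 3) (Fin 3) ℝ) (hε : εᵀ = ε) (hω : ωᵀ = -ω) :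
    let e := dev ε
    let gsym := dev (symPart χ)
    let gskw := skewPart χ
    let σ := (K * ε.trace) • (1 : Matrix (Fin 3) (Fin 3) ℝ) + (2 * G) • e + (2 * Gc) • ω
    let μ := (Kc * χ.trace) • (1 : Matrix (Fin 3) (Fin 3) ℝ) + (2 * B) • gsym + (2 * Bc) • gskw
    let ssym := dev (symPart σ)
    let sskw := skewPart σ
    let msym := dev (symPart μ)
    let mskw := skewPart μ
    (1 / 2 : ℝ) * (dc ssym ε + dc sskw ω + dc msym gsym + dc mskw gskw
        + (1 / 3) * μ.trace * χ.trace) =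
      (1 / (4 * G)) * (dc ssym ssym + (G / Gc) * dc sskw sskw + (G / B) * dc msym msym
        + (G / Bc) * dc mskw mskw + (2 * G / Kc) * μ.trace ^ 2 / 9) :=
  stmt_7_general K G Gc B Bc Kc hG hGc hB hBc hKc ε ω χ hε hω
end

section
/- For every symmetric traceless 3×3 real matrix s, (27/2)|det s| ≤ ((3/2) s : s)^{3/2}; equivalently, 27² (det s)² ≤ 4 ((3/2) s : s)³. Consequently, whenever q_s = √((3/2) s : s) > 0, the quantity −(27/2) det(s)/q_s³ lies in [−1, 1], so the Lode angle θ_s = (1/3) arcsin( −(27/2) det(s)/q_s³ ) is well defined and lies in [−π/6, π/6]. -/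
/-!
The eigenvalues `a, b, c` of the symmetric matrix `s` are real, with `a + b + c = tr s = 0`,
`s : s = tr (s²) = a² + b² + c²` and `det s = a b c`. On the plane `a + b + c = 0` the
discriminant of the cubic with roots `a, b, c` gives
`(a² + b² + c²)³ - 54 (a b c)² = 2 ((a - b) (b - c) (c - a))² ≥ 0`,
which after scaling is `27² (det s)² ≤ 4 ((3/2) s : s)³`. Hence `|(27/2) det s| ≤ q_s³`, the
argument of `arcsin` lies in `[-1, 1]`, and the Lode angle lies in `(1/3) [-π/2, π/2]`.
-/

open Matrix Real

namespace Matrix.IsHermitian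

variable {𝕜 n : Type*} [RCLike 𝕜] [Fintype n] [DecidableEq n] {A : Matrix n n 𝕜}

theorem trace_pow_eq_sum_eigenvalues_pow (hA : A.IsHermitian) (k : ℕ) :
    (A ^ k).trace = ∑ i, (hA.eigenvalues i : 𝕜) ^ k := by
  conv_lhs => rw [hA.spectral_theorem, ← map_pow]
  rw [diagonal_pow, Unitary.conjStarAlgAut_apply, trace_mul_cycle, Unitary.coe_star_mul_self,
    one_mul, trace_diagonal]
  rfl

end Matrix.IsHermitian

theorem sq_prod_le_of_add_eq_zero {R : Type*} [CommRing R] [LinearOrder R] [IsStrictOrderedRing R]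
    {a b c : R} (h : a + b + c = 0) :
    54 * (a * b * c) ^ 2 ≤ (a ^ 2 + b ^ 2 + c ^ 2) ^ 3 := by
  obtain rfl : c = -a - b := by linarith
  linear_combination 2 * sq_nonneg ((a - b) * (b - (-a - b)) * (-a - b - a))

theorem Matrix.IsHermitian.det_sq_le_of_trace_eq_zero {A : Matrix (Fin 3) (Fin 3) ℝ}
    (hA : A.IsHermitian) (htr : A.trace = 0) : 54 * A.det ^ 2 ≤ (A ^ 2).trace ^ 3 := by
  have hsum := hA.trace_pow_eq_sum_eigenvalues_pow 1
  rw [pow_one, htr] at hsum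
  simp only [hA.det_eq_prod_eigenvalues, hA.trace_pow_eq_sum_eigenvalues_pow 2,
    Fin.prod_univ_three, Fin.sum_univ_three, RCLike.ofReal_real_eq_id, id, pow_one] at hsum ⊢
  exact sq_prod_le_of_add_eq_zero hsum.symm

theorem dc_eq_trace_transpose_mul (A B : Matrix (Fin 3) (Fin 3) ℝ) :
    dc A B = (Aᵀ * B).trace := by
  simp only [dc, trace, diag_apply, mul_apply, transpose_apply]
  exact Finset.sum_comm

theorem dc_self_nonneg (A : Matrix (Fin 3) (Fin 3) ℝ) : 0 ≤ dc A A :=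
  Finset.sum_nonneg fun i _ => Finset.sum_nonneg fun j _ => mul_self_nonneg (A i j)

theorem Real.sqrt_pow_three {x : ℝ} (hx : 0 ≤ x) : √x ^ 3 = x ^ (3 / 2 : ℝ) := by
  rw [sqrt_eq_rpow, ← rpow_mul_natCast hx]
  norm_num

theorem Real.abs_le_sqrt_pow_three {x y : ℝ} (hy : 0 ≤ y) (h : x ^ 2 ≤ y ^ 3) :
    |x| ≤ √y ^ 3 := by
  refine abs_le_of_sq_le_sq ?_ (by positivity)
  rwa [← pow_mul, mul_comm, pow_mul, sq_sqrt hy]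

theorem div_mem_Icc_neg_one_one {K : Type*} [Field K] [LinearOrder K] [IsStrictOrderedRing K]
    {x y : K} (hy : 0 < y) (h : |x| ≤ y) : x / y ∈ Set.Icc (-1) 1 := by
  rw [Set.mem_Icc, ← abs_le, abs_div, abs_of_pos hy, div_le_one hy]
  exact h

theorem Real.arcsin_div_three_mem_Icc (x : ℝ) :
    (1 / 3) * arcsin x ∈ Set.Icc (-(π / 6)) (π / 6) := by
  constructor <;> linarith [neg_pi_div_two_le_arcsin x, arcsin_le_pi_div_two x]

theorem stmt_12 (s : Matrix (Fin 3) (Fin 3) ℝ) (hsym : sᵀ = s) (htr : s.trace = 0) :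
    (27 / 2) * |s.det| ≤ ((3 / 2) * dc s s) ^ ((3 : ℝ) / 2) ∧
    27 ^ 2 * s.det ^ 2 ≤ 4 * ((3 / 2) * dc s s) ^ 3 ∧
    (0 < Real.sqrt ((3 / 2) * dc s s) →
      (-(27 / 2) * s.det / Real.sqrt ((3 / 2) * dc s s) ^ 3 ∈ Set.Icc (-1 : ℝ) 1 ∧
       (1 / 3) * Real.arcsin (-(27 / 2) * s.det / Real.sqrt ((3 / 2) * dc s s) ^ 3) ∈
         Set.Icc (-(π / 6)) (π / 6))) := by
  have hdc : dc s s = (s ^ 2).trace := by rw [dc_eq_trace_transpose_mul, hsym, sq]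
  have hdet : 54 * s.det ^ 2 ≤ dc s s ^ 3 :=
    hdc ▸ IsHermitian.det_sq_le_of_trace_eq_zero hsym htr
  have hQ : 0 ≤ (3 / 2) * dc s s := by linarith [dc_self_nonneg s]
  have hdisc : 27 ^ 2 * s.det ^ 2 ≤ 4 * ((3 / 2) * dc s s) ^ 3 := by linarith
  have hbound : |-(27 / 2) * s.det| ≤ √((3 / 2) * dc s s) ^ 3 :=
    abs_le_sqrt_pow_three hQ (by linarith)
  have habs : |-(27 / 2) * s.det| = 27 / 2 * |s.det| := by rw [abs_mul]; norm_num
  refine ⟨habs ▸ sqrt_pow_three hQ ▸ hbound, hdisc, fun hq => ?_⟩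
  exact ⟨div_mem_Icc_neg_one_one (pow_pos hq 3) hbound, arcsin_div_three_mem_Icc _⟩
end
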